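/- arXiv:1511.07166 — 2 statements merged into one kernel-verified Lean document; each statement's English description precedes it below -/
import Mathlib

section
/- For all integers λ₁, λ₂: H0(λ₁,λ₂) ≠ 0 if and only if λ₁ ≥ 0 and λ₁ + λ₂ ≥ 0; H1(λ₁,λ₂) ≠ 0 if and only if λ₁ ≤ −2 and λ₂ ≥ 1; H2(λ₁,λ₂) ≠ 0 if and only if λ₁ ≥ 0 and λ₂ ≤ −3; H3(λ₁,λ₂) ≠ 0 if and only if λ₁ ≤ −2 and λ₁ + λ₂ ≤ −4. -/
/-!
Each `Hi` is, in its range of definition, a sum of the nonnegative terms `C₂(a + j)` or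
`C₂(a - j)` over `0 ≤ j ≤ N`. Such a sum vanishes iff every term does, and since the arguments
are monotone in `j` it suffices to look at the largest one, at `j = N` or `j = 0` respectively;
`C₂(n) ≠ 0` means `n ≥ 2`.
-/

open Finset

/-- C₂(n) = C(max(n,0), 2), i.e. n(n−1)/2 for n ≥ 2 and 0 for n ≤ 1. -/
def C2 (n : ℤ) : ℤ := (n.toNat.choose 2 : ℤ)

/-- h⁰(F, O_F(λ₁ξ + λ₂f)) on the del Pezzo threefold F of degree 7. -/
def H0 (l1 l2 : ℤ) : ℤ :=
  if 0 ≤ l1 then ∑ j ∈ Finset.range (l1.toNat + 1), C2 (l1 + l2 - (j : ℤ) + 2) else 0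

/-- h¹(F, O_F(λ₁ξ + λ₂f)) on the del Pezzo threefold F of degree 7. -/
def H1 (l1 l2 : ℤ) : ℤ :=
  if l1 ≤ -2 then ∑ j ∈ Finset.range ((-l1 - 2).toNat + 1), C2 (l1 + l2 + (j : ℤ) + 3) else 0

/-- h²(F, O_F(λ₁ξ + λ₂f)) on the del Pezzo threefold F of degree 7. -/
def H2 (l1 l2 : ℤ) : ℤ :=
  if 0 ≤ l1 then ∑ j ∈ Finset.range (l1.toNat + 1), C2 (-l1 - l2 + (j : ℤ) - 1) else 0

/-- h³(F, O_F(λ₁ξ + λ₂f)) on the del Pezzo threefold F of degree 7. -/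
def H3 (l1 l2 : ℤ) : ℤ :=
  if l1 ≤ -2 then ∑ j ∈ Finset.range ((-l1 - 2).toNat + 1), C2 (-l1 - l2 - (j : ℤ) - 2) else 0

lemma C2_nonneg (n : ℤ) : 0 ≤ C2 n := Int.natCast_nonneg _

lemma C2_ne_zero_iff (n : ℤ) : C2 n ≠ 0 ↔ 2 ≤ n := by
  simp [C2, Nat.choose_eq_zero_iff]
  omega

lemma sum_range_C2_ne_zero_iff (f : ℕ → ℤ) (N : ℕ) :
    ∑ j ∈ range (N + 1), C2 (f j) ≠ 0 ↔ ∃ j ≤ N, 2 ≤ f j := by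
  rw [Ne, sum_eq_zero_iff_of_nonneg fun j _ => C2_nonneg _]
  simp only [mem_range, Nat.lt_add_one_iff, not_forall, C2_ne_zero_iff, exists_prop]

lemma sum_range_C2_ne_zero_iff_of_monotone {f : ℕ → ℤ} (hf : Monotone f) (N : ℕ) :
    ∑ j ∈ range (N + 1), C2 (f j) ≠ 0 ↔ 2 ≤ f N := by
  rw [sum_range_C2_ne_zero_iff]
  exact ⟨fun ⟨j, hj, h⟩ => h.trans (hf hj), fun h => ⟨N, le_rfl, h⟩⟩

lemma sum_range_C2_ne_zero_iff_of_antitone {f : ℕ → ℤ} (hf : Antitone f) (N : ℕ) :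
    ∑ j ∈ range (N + 1), C2 (f j) ≠ 0 ↔ 2 ≤ f 0 := by
  rw [sum_range_C2_ne_zero_iff]
  exact ⟨fun ⟨j, _, h⟩ => h.trans (hf j.zero_le), fun h => ⟨0, N.zero_le, h⟩⟩

lemma H0_ne_zero_iff (l1 l2 : ℤ) : H0 l1 l2 ≠ 0 ↔ 0 ≤ l1 ∧ 0 ≤ l1 + l2 := by
  unfold H0
  split_ifs with h
  · rw [sum_range_C2_ne_zero_iff_of_antitone fun i j (hij : i ≤ j) => by omega]
    omega
  · simp [h]

lemma H1_ne_zero_iff (l1 l2 : ℤ) : H1 l1 l2 ≠ 0 ↔ l1 ≤ -2 ∧ 1 ≤ l2 := by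
  unfold H1
  split_ifs with h
  · rw [sum_range_C2_ne_zero_iff_of_monotone fun i j (hij : i ≤ j) => by omega]
    omega
  · simp [h]

lemma H2_ne_zero_iff (l1 l2 : ℤ) : H2 l1 l2 ≠ 0 ↔ 0 ≤ l1 ∧ l2 ≤ -3 := by
  unfold H2
  split_ifs with h
  · rw [sum_range_C2_ne_zero_iff_of_monotone fun i j (hij : i ≤ j) => by omega]
    omega
  · simp [h]

lemma H3_ne_zero_iff (l1 l2 : ℤ) : H3 l1 l2 ≠ 0 ↔ l1 ≤ -2 ∧ l1 + l2 ≤ -4 := by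
  unfold H3
  split_ifs with h
  · rw [sum_range_C2_ne_zero_iff_of_antitone fun i j (hij : i ≤ j) => by omega]
    omega
  · simp [h]

theorem line_bundle_cohomology_nonvanishing (l1 l2 : ℤ) :
    (H0 l1 l2 ≠ 0 ↔ 0 ≤ l1 ∧ 0 ≤ l1 + l2) ∧
    (H1 l1 l2 ≠ 0 ↔ l1 ≤ -2 ∧ 1 ≤ l2) ∧
    (H2 l1 l2 ≠ 0 ↔ 0 ≤ l1 ∧ l2 ≤ -3) ∧
    (H3 l1 l2 ≠ 0 ↔ l1 ≤ -2 ∧ l1 + l2 ≤ -4) :=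
  ⟨H0_ne_zero_iff l1 l2, H1_ne_zero_iff l1 l2, H2_ne_zero_iff l1 l2, H3_ne_zero_iff l1 l2⟩
end

section
/- The set of pairs of integers (λ₁, λ₂) satisfying all of: H0(λ₁,λ₂) ≠ 0, H0(λ₁−1,λ₂−1) = 0, and H1(λ₁+t,λ₂+t) = 0 and H2(λ₁+t,λ₂+t) = 0 for every integer t, is exactly {(0,0), (0,1), (0,2), (1,0), (1,−1)}. -/
open Finset

/-!
Each of `H0`, `H1`, `H2` is a sum of the nonnegative numbers `C2 n`, and `C2 n = 0` exactly when
`n ≤ 1`; so each vanishes iff its largest argument is at most `1`, a linear condition. Being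
initialized becomes `0 ≤ λ₁`, `0 ≤ λ₁ + λ₂` and (`λ₁ = 0` or `λ₁ + λ₂ ≤ 1`). Along the twists
`(λ₁ + t, λ₂ + t)` the worst cases are `t = -λ₁ - 2` for `H1` and `t = -λ₁` for `H2`, so being
aCM becomes `|λ₁ - λ₂| ≤ 2`. These inequalities have exactly the five listed solutions.
-/

def IsInitialized (l1 l2 : ℤ) : Prop :=
  H0 l1 l2 ≠ 0 ∧ H0 (l1 - 1) (l2 - 1) = 0

def IsACM (l1 l2 : ℤ) : Prop :=
  ∀ t : ℤ, H1 (l1 + t) (l2 + t) = 0 ∧ H2 (l1 + t) (l2 + t) = 0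

lemma C2_eq_zero_iff (n : ℤ) : C2 n = 0 ↔ n ≤ 1 := by
  rw [C2, Nat.cast_eq_zero, Nat.choose_eq_zero_iff]
  omega

lemma sum_range_C2_eq_zero_iff (n : ℕ) (f : ℕ → ℤ) :
    ∑ j ∈ range (n + 1), C2 (f j) = 0 ↔ ∀ j ≤ n, f j ≤ 1 := by
  rw [sum_eq_zero_iff_of_nonneg fun j _ => C2_nonneg _]
  simp only [mem_range, Nat.lt_succ_iff, C2_eq_zero_iff]

lemma H0_eq_zero_iff (l1 l2 : ℤ) : H0 l1 l2 = 0 ↔ l1 < 0 ∨ l1 + l2 < 0 := by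
  rw [H0]
  split_ifs with h
  · rw [sum_range_C2_eq_zero_iff]
    exact ⟨fun hall => by have := hall 0 (Nat.zero_le _); omega, fun _ j _ => by omega⟩
  · simp only [true_iff]
    omega

lemma H1_eq_zero_iff (l1 l2 : ℤ) : H1 l1 l2 = 0 ↔ -2 < l1 ∨ l2 ≤ 0 := by
  rw [H1]
  split_ifs with h
  · rw [sum_range_C2_eq_zero_iff]
    exact ⟨fun hall => by have := hall _ le_rfl; omega, fun _ j hj => by omega⟩
  · simp only [true_iff]
    omega

lemma H2_eq_zero_iff (l1 l2 : ℤ) : H2 l1 l2 = 0 ↔ l1 < 0 ∨ -2 ≤ l2 := by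
  rw [H2]
  split_ifs with h
  · rw [sum_range_C2_eq_zero_iff]
    exact ⟨fun hall => by have := hall _ le_rfl; omega, fun _ j hj => by omega⟩
  · simp only [true_iff]
    omega

lemma isInitialized_iff (l1 l2 : ℤ) :
    IsInitialized l1 l2 ↔ 0 ≤ l1 ∧ 0 ≤ l1 + l2 ∧ (l1 = 0 ∨ l1 + l2 ≤ 1) := by
  rw [IsInitialized, Ne, H0_eq_zero_iff, H0_eq_zero_iff]
  omega

lemma isACM_iff (l1 l2 : ℤ) : IsACM l1 l2 ↔ l2 ≤ l1 + 2 ∧ l1 ≤ l2 + 2 := by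
  simp only [IsACM, H1_eq_zero_iff, H2_eq_zero_iff]
  refine ⟨fun h => ?_, fun h t => by omega⟩
  have h1 := (h (-l1 - 2)).1
  have h2 := (h (-l1)).2
  omega

theorem initialized_aCM_line_bundles :
    {p : ℤ × ℤ | H0 p.1 p.2 ≠ 0 ∧ H0 (p.1 - 1) (p.2 - 1) = 0 ∧
        ∀ t : ℤ, H1 (p.1 + t) (p.2 + t) = 0 ∧ H2 (p.1 + t) (p.2 + t) = 0} =
      {(0, 0), (0, 1), (0, 2), (1, 0), (1, -1)} := by
  ext ⟨a, b⟩
  rw [Set.mem_ofPred_eq, ← and_assoc]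
  change IsInitialized a b ∧ IsACM a b ↔ _
  simp only [isInitialized_iff, isACM_iff, Set.mem_insert_iff, Set.mem_singleton_iff,
    Prod.mk.injEq]
  omega
end
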